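/- arXiv:2511.00725 — 2 statements merged into one kernel-verified Lean document; each statement's English description precedes it below -/
import Mathlib

section
/- Let S ⊆ ℝ³ be an open set, x₀ ∈ ℝ³, r > 0 and δ ∈ (0,1). If S is 3D δ-sparse around x₀ at scale r, i.e. the Lebesgue measure of S ∩ B_r(x₀) is at most δ · (4/3)πr³, then S is 1D δ^{1/3}-sparse around x₀ at scale r, i.e. there exists a unit vector ν ∈ ℝ³ such that the one-dimensional Lebesgue measure of {t ∈ (−r, r) : x₀ + tν ∈ S} is at most δ^{1/3} · 2r. -/
/-!
Pass to polar coordinates around `x₀` in dimension `d`: with `U = S ∩ B_r(x₀)`, one has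
`d · |U| = ∫_{S^{d-1}} d ∫_{ray_ν} t^{d-1} dt dν`, and the sphere has measure `d · |B_1|`.
On a ray, a set of length `a` has `d ∫ t^{d-1} ≥ a^d`, the worst case being `(0, a)`.
Averaging the moments of the two opposite rays over the sphere yields a direction `ν`
whose half-lines carry lengths `a`, `b` with `a^d + b^d ≤ 2δr^d`, and the power mean inequality
`(a + b)^d ≤ 2^{d-1}(a^d + b^d)` turns this into `a + b ≤ δ^{1/d} · 2r`.
-/

open MeasureTheory Set Metric
open scoped ENNReal

theorem natCast_mul_lintegral_Ico_pow {a : ℝ} (ha : 0 ≤ a) {n : ℕ} (hn : n ≠ 0) :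
    n * ∫⁻ t in Ico 0 a, ENNReal.ofReal (t ^ (n - 1)) = ENNReal.ofReal (a ^ n) := by
  rw [← ofReal_integral_eq_lintegral_ofReal, integral_Ico_eq_integral_Ioo,
    ← integral_Ioc_eq_integral_Ioo, ← intervalIntegral.integral_of_le ha, integral_pow,
    Nat.sub_add_cancel (Nat.one_le_iff_ne_zero.2 hn), Nat.cast_pred (Nat.pos_of_ne_zero hn),
    sub_add_cancel, zero_pow hn, sub_zero, ENNReal.ofReal_div_of_pos (by positivity),
    ENNReal.ofReal_natCast,
    ENNReal.mul_div_cancel (Nat.cast_ne_zero.2 hn) (ENNReal.natCast_ne_top n)]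
  · exact (continuous_pow _).integrableOn_Icc.mono_set Ico_subset_Icc_self
  · filter_upwards [ae_restrict_mem measurableSet_Ico] with t ht using pow_nonneg ht.1 _

theorem ofReal_pow_le_mul_lintegral_pow {B : Set ℝ} (hB : MeasurableSet B) (hB0 : B ⊆ Ici 0)
    (hBfin : volume B ≠ ∞) {n : ℕ} (hn : n ≠ 0) :
    ENNReal.ofReal ((volume B).toReal ^ n) ≤ n * ∫⁻ t in B, ENNReal.ofReal (t ^ (n - 1)) := by
  set a := (volume B).toReal
  set I := Ico 0 a
  have hI : MeasurableSet I := measurableSet_Ico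
  -- exchanging `I \ B` for `B \ I`, of equal measure, moves mass to where `t ^ (n - 1)` is larger
  have hdiff : volume (I \ B) = volume (B \ I) :=
    measure_sdiff_symm hI.nullMeasurableSet hB.nullMeasurableSet
      (by simp [I, a, ENNReal.ofReal_toReal hBfin])
      (measure_ne_top_of_subset inter_subset_right hBfin)
  have hIB : ∫⁻ t in I \ B, ENNReal.ofReal (t ^ (n - 1)) ≤
      ENNReal.ofReal (a ^ (n - 1)) * volume (I \ B) := by
    rw [← setLIntegral_const]
    exact setLIntegral_mono measurable_const fun t ht =>
      ENNReal.ofReal_le_ofReal (pow_le_pow_left₀ ht.1.1 ht.1.2.le _)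
  have hBI : ENNReal.ofReal (a ^ (n - 1)) * volume (B \ I) ≤
      ∫⁻ t in B \ I, ENNReal.ofReal (t ^ (n - 1)) := by
    rw [← setLIntegral_const]
    refine setLIntegral_mono (by fun_prop) fun t ht => ENNReal.ofReal_le_ofReal ?_
    exact pow_le_pow_left₀ ENNReal.toReal_nonneg (not_lt.1 fun h => ht.2 ⟨hB0 ht.1, h⟩) _
  calc ENNReal.ofReal (a ^ n)
      = n * ((∫⁻ t in I ∩ B, ENNReal.ofReal (t ^ (n - 1))) +
          ∫⁻ t in I \ B, ENNReal.ofReal (t ^ (n - 1))) := by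
        rw [lintegral_inter_add_sdiff _ _ hB,
          natCast_mul_lintegral_Ico_pow ENNReal.toReal_nonneg hn]
    _ ≤ n * ((∫⁻ t in B ∩ I, ENNReal.ofReal (t ^ (n - 1))) +
          ∫⁻ t in B \ I, ENNReal.ofReal (t ^ (n - 1))) := by
        rw [inter_comm]
        exact mul_le_mul_right (add_le_add le_rfl (hIB.trans (hdiff ▸ hBI))) _
    _ = n * ∫⁻ t in B, ENNReal.ofReal (t ^ (n - 1)) := by
        rw [lintegral_inter_add_sdiff _ _ hI]

theorem add_le_rpow_inv_mul_of_pow_add_pow_le {a b δ r : ℝ} {n : ℕ} (hn : n ≠ 0) (ha : 0 ≤ a)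
    (hb : 0 ≤ b) (hδ : 0 ≤ δ) (hr : 0 ≤ r) (h : a ^ n + b ^ n ≤ 2 * δ * r ^ n) :
    a + b ≤ δ ^ (n⁻¹ : ℝ) * (2 * r) := by
  refine (pow_le_pow_iff_left₀ (add_nonneg ha hb) (by positivity) hn).1 ?_
  calc (a + b) ^ n ≤ 2 ^ (n - 1) * (a ^ n + b ^ n) := add_pow_le ha hb n
    _ ≤ 2 ^ (n - 1) * (2 * δ * r ^ n) := by gcongr
    _ = (δ ^ (n⁻¹ : ℝ) * (2 * r)) ^ n := by
        rw [mul_pow, Real.rpow_inv_natCast_pow hδ hn, mul_pow, ← pow_sub_one_mul hn (2 : ℝ)]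
        ring

section Ray

variable {E : Type*} [NormedAddCommGroup E] [NormedSpace ℝ E]

def raySet (V : Set E) (v : E) : Set ℝ := {t | 0 < t ∧ t • v ∈ V}

/-- In polar coordinates in dimension `n`, the contribution of the ray `ℝ₊ v` to `n · μ V`. -/
noncomputable def rayMoment (n : ℕ) (V : Set E) (v : E) : ℝ≥0∞ :=
  n * ∫⁻ t in raySet V v, ENNReal.ofReal (t ^ (n - 1))

theorem raySet_neg (V : Set E) (v : E) : raySet (-V) v = raySet V (-v) := by
  ext t
  simp [raySet, smul_neg]

theorem rayMoment_neg (n : ℕ) (V : Set E) (v : E) :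
    rayMoment n (-V) v = rayMoment n V (-v) := by
  rw [rayMoment, rayMoment, raySet_neg]

theorem raySet_inter_ball_subset (V : Set E) {v : E} (hv : ‖v‖ = 1) (r : ℝ) :
    raySet (V ∩ ball 0 r) v ⊆ Ioo 0 r := fun t ⟨ht, _, htr⟩ => by
  rw [mem_ball_zero_iff, norm_smul, hv, mul_one, Real.norm_of_nonneg ht.le] at htr
  exact ⟨ht, htr⟩

theorem volume_raySet_inter_ball_ne_top (V : Set E) {v : E} (hv : ‖v‖ = 1) (r : ℝ) :
    volume (raySet (V ∩ ball 0 r) v) ≠ ∞ :=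
  measure_ne_top_of_subset (raySet_inter_ball_subset V hv r) (by simp [Real.volume_Ioo])

theorem volume_line_le_volume_raySet_add (V : Set E) {v : E} (hv : ‖v‖ = 1) (r : ℝ) :
    volume {t : ℝ | t ∈ Ioo (-r) r ∧ t • v ∈ V} ≤
      volume (raySet (V ∩ ball 0 r) v) + volume (raySet (V ∩ ball 0 r) (-v)) := by
  have hcover : {t : ℝ | t ∈ Ioo (-r) r ∧ t • v ∈ V} ⊆
      raySet (V ∩ ball 0 r) v ∪ (-raySet (V ∩ ball 0 r) (-v) ∪ {0}) := by
    rintro t ⟨⟨hlt, hrt⟩, htV⟩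
    have htr : t • v ∈ ball (0 : E) r := by
      rw [mem_ball_zero_iff, norm_smul, hv, mul_one, Real.norm_eq_abs, abs_lt]
      exact ⟨hlt, hrt⟩
    rcases lt_trichotomy t 0 with ht | rfl | ht
    · exact Or.inr (Or.inl ⟨neg_pos.2 ht, by simpa using htV, by simpa using htr⟩)
    · exact Or.inr (Or.inr rfl)
    · exact Or.inl ⟨ht, htV, htr⟩
  calc volume {t : ℝ | t ∈ Ioo (-r) r ∧ t • v ∈ V}
      ≤ volume (raySet (V ∩ ball 0 r) v) +
          (volume (-raySet (V ∩ ball 0 r) (-v)) + volume ({0} : Set ℝ)) :=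
        (measure_mono hcover).trans
          ((measure_union_le _ _).trans (add_le_add le_rfl (measure_union_le _ _)))
    _ = volume (raySet (V ∩ ball 0 r) v) + volume (raySet (V ∩ ball 0 r) (-v)) := by
        rw [Measure.measure_neg, Real.volume_singleton, add_zero]

variable [MeasurableSpace E] [BorelSpace E]

theorem measurableSet_raySet {V : Set E} (hV : MeasurableSet V) (v : E) :
    MeasurableSet (raySet V v) :=
  measurableSet_Ioi.inter (hV.preimage (by fun_prop))

theorem volumeIoiPow_setOf_smul_mem {V : Set E} (hV : MeasurableSet V) (v : E) (n : ℕ) :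
    Measure.volumeIoiPow n {t : Ioi (0 : ℝ) | (t : ℝ) • v ∈ V} =
      ∫⁻ t in raySet V v, ENNReal.ofReal (t ^ n) := by
  have hmeas : MeasurableSet {t : Ioi (0 : ℝ) | (t : ℝ) • v ∈ V} :=
    hV.preimage (by fun_prop)
  rw [Measure.volumeIoiPow, withDensity_apply _ hmeas,
    setLIntegral_subtype measurableSet_Ioi _ fun t : ℝ => ENNReal.ofReal (t ^ n)]
  congr 2
  ext t
  simp [raySet, and_comm]

theorem measurable_rayMoment {V : Set E} (hV : MeasurableSet V) (n : ℕ) :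
    Measurable fun ν : sphere (0 : E) 1 => rayMoment n V ν := by
  simp_rw [rayMoment, ← volumeIoiPow_setOf_smul_mem hV]
  exact (measurable_measure_prodMk_left
    (hV.preimage (by fun_prop : Measurable fun p : sphere (0 : E) 1 × Ioi (0 : ℝ) =>
      (p.2 : ℝ) • (p.1 : E)))).const_mul _

variable [FiniteDimensional ℝ E] [Nontrivial E] (μ : Measure E) [μ.IsAddHaarMeasure]

theorem measure_eq_lintegral_toSphere_raySet {V : Set E} (hV : MeasurableSet V) :
    μ V = ∫⁻ ν : sphere (0 : E) 1,
      (∫⁻ t in raySet V ν, ENNReal.ofReal (t ^ (Module.finrank ℝ E - 1))) ∂μ.toSphere := by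
  set A : Set (sphere (0 : E) 1 × Ioi (0 : ℝ)) := {p | (p.2 : ℝ) • (p.1 : E) ∈ V}
  have hA : MeasurableSet A := hV.preimage (by fun_prop)
  have hpre : homeomorphUnitSphereProd E ⁻¹' A = Subtype.val ⁻¹' V := by
    ext v
    simp [A, homeomorphUnitSphereProd_apply_fst_coe, homeomorphUnitSphereProd_apply_snd_coe,
      smul_smul, mul_inv_cancel₀ (norm_ne_zero_iff.2 v.2)]
  have hsections := (μ.measurePreserving_homeomorphUnitSphereProd).measure_preimage
    hA.nullMeasurableSet
  rw [hpre, comap_subtype_coe_apply (measurableSet_singleton (0 : E)).compl,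
    image_preimage_eq_inter_range, Subtype.range_coe, ← sdiff_eq,
    measure_sdiff_null (measure_singleton _), Measure.prod_apply hA] at hsections
  rw [hsections]
  simp_rw [← volumeIoiPow_setOf_smul_mem hV]
  rfl

theorem exists_rayMoment_add_rayMoment_neg_le {V : Set E} (hV : MeasurableSet V) :
    ∃ ν : E, ‖ν‖ = 1 ∧ μ (ball 0 1) *
      (rayMoment (Module.finrank ℝ E) V ν + rayMoment (Module.finrank ℝ E) V (-ν)) ≤
        2 * μ V := by
  set d := Module.finrank ℝ E
  set f := fun ν : sphere (0 : E) 1 => rayMoment d V ν + rayMoment d V (-ν)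
  have hf_neg : Measurable fun ν : sphere (0 : E) 1 => rayMoment d V (-ν) := by
    simpa only [rayMoment_neg] using measurable_rayMoment hV.neg d
  have hf : ∫⁻ ν, f ν ∂μ.toSphere = d * (2 * μ V) := by
    rw [lintegral_add_right _ hf_neg]
    simp only [rayMoment]
    rw [lintegral_const_mul' _ _ (ENNReal.natCast_ne_top d),
      lintegral_const_mul' _ _ (ENNReal.natCast_ne_top d)]
    simp_rw [← raySet_neg]
    rw [← measure_eq_lintegral_toSphere_raySet μ hV,
      ← measure_eq_lintegral_toSphere_raySet μ hV.neg, Measure.measure_neg]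
    ring
  obtain ⟨ν, hν⟩ := exists_le_laverage μ.toSphere_ne_zero
    ((measurable_rayMoment hV d).add hf_neg).aemeasurable
  refine ⟨ν, mem_sphere_zero_iff_norm.1 ν.2, ?_⟩
  rw [← ENNReal.mul_le_mul_iff_right (Nat.cast_ne_zero.2 Module.finrank_pos.ne')
    (ENNReal.natCast_ne_top d), ← mul_assoc, ← Measure.toSphere_apply_univ, ← hf,
    ← measure_mul_laverage]
  exact mul_le_mul_right hν _

theorem exists_volume_line_le_of_measure_inter_ball_le {S : Set E} (hS : MeasurableSet S)
    {r δ : ℝ} (hr : 0 ≤ r) (hδ : 0 ≤ δ)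
    (hsparse : μ (S ∩ ball 0 r) ≤ ENNReal.ofReal δ * μ (ball 0 r)) :
    ∃ ν : E, ‖ν‖ = 1 ∧ volume {t : ℝ | t ∈ Ioo (-r) r ∧ t • ν ∈ S} ≤
      ENNReal.ofReal (δ ^ ((Module.finrank ℝ E : ℝ)⁻¹) * (2 * r)) := by
  set d := Module.finrank ℝ E
  have hd : d ≠ 0 := Module.finrank_pos.ne'
  set U := S ∩ ball (0 : E) r
  have hU : MeasurableSet U := hS.inter measurableSet_ball
  obtain ⟨ν, hν, hmoment⟩ := exists_rayMoment_add_rayMoment_neg_le μ hU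
  have hfin_pos := volume_raySet_inter_ball_ne_top S hν r
  have hfin_neg := volume_raySet_inter_ball_ne_top S (v := -ν) (by rwa [norm_neg]) r
  have hmoment_pos := ofReal_pow_le_mul_lintegral_pow (measurableSet_raySet hU ν)
    (fun t ht => ht.1.le) hfin_pos hd
  have hmoment_neg := ofReal_pow_le_mul_lintegral_pow (measurableSet_raySet hU (-ν))
    (fun t ht => ht.1.le) hfin_neg hd
  set a := (volume (raySet U ν)).toReal
  set b := (volume (raySet U (-ν))).toReal
  have hpow : a ^ d + b ^ d ≤ 2 * δ * r ^ d := by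
    have hball : μ (ball 0 1) ≠ 0 := (measure_ball_pos μ 0 one_pos).ne'
    rw [← ENNReal.ofReal_le_ofReal_iff (by positivity), ENNReal.ofReal_add (by positivity)
      (by positivity), ← ENNReal.mul_le_mul_iff_right hball measure_ball_lt_top.ne]
    calc μ (ball 0 1) * (ENNReal.ofReal (a ^ d) + ENNReal.ofReal (b ^ d))
        ≤ 2 * μ U := (mul_le_mul_right (add_le_add hmoment_pos hmoment_neg) _).trans hmoment
      _ ≤ 2 * (ENNReal.ofReal δ * (ENNReal.ofReal (r ^ d) * μ (ball 0 1))) := by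
          rw [← μ.addHaar_ball 0 hr]
          exact mul_le_mul_right hsparse _
      _ = μ (ball 0 1) * ENNReal.ofReal (2 * δ * r ^ d) := by
          rw [ENNReal.ofReal_mul (by positivity), ENNReal.ofReal_mul zero_le_two,
            ENNReal.ofReal_ofNat]
          ring
  refine ⟨ν, hν, (volume_line_le_volume_raySet_add S hν r).trans ?_⟩
  rw [← ENNReal.ofReal_toReal hfin_pos, ← ENNReal.ofReal_toReal hfin_neg,
    ← ENNReal.ofReal_add ENNReal.toReal_nonneg ENNReal.toReal_nonneg]
  exact ENNReal.ofReal_le_ofReal (add_le_rpow_inv_mul_of_pow_add_pow_le hd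
    ENNReal.toReal_nonneg ENNReal.toReal_nonneg hδ hr hpow)

end Ray

theorem sparse3D_implies_sparse1D_general
    (S : Set (EuclideanSpace ℝ (Fin 3))) (hS : IsOpen S)
    (x₀ : EuclideanSpace ℝ (Fin 3)) (r δ : ℝ)
    (hr : 0 < r) (hδ0 : 0 < δ)
    (hsparse3 : volume (S ∩ Metric.ball x₀ r) ≤
      ENNReal.ofReal (δ * ((4 / 3) * Real.pi * r ^ 3))) :
    ∃ ν : EuclideanSpace ℝ (Fin 3), ‖ν‖ = 1 ∧
      volume {t : ℝ | t ∈ Set.Ioo (-r) r ∧ x₀ + t • ν ∈ S} ≤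
        ENNReal.ofReal (δ ^ ((1 : ℝ) / 3) * (2 * r)) := by
  have hball : ball (0 : EuclideanSpace ℝ (Fin 3)) r = (x₀ + ·) ⁻¹' ball x₀ r := by
    rw [preimage_add_ball, sub_self]
  have hsparse : volume ((x₀ + ·) ⁻¹' S ∩ ball 0 r) ≤
      ENNReal.ofReal δ * volume (ball (0 : EuclideanSpace ℝ (Fin 3)) r) := by
    rw [hball, ← preimage_inter, measure_preimage_add, measure_preimage_add,
      EuclideanSpace.volume_ball_fin_three, ← ENNReal.ofReal_pow hr.le, ← ENNReal.ofReal_mul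
        (by positivity), ← ENNReal.ofReal_mul hδ0.le]
    convert hsparse3 using 3
    ring
  obtain ⟨ν, hν, hline⟩ := exists_volume_line_le_of_measure_inter_ball_le volume
    (hS.measurableSet.preimage (measurable_const_add x₀)) hr.le hδ0.le hsparse
  refine ⟨ν, hν, hline.trans_eq ?_⟩
  rw [finrank_euclideanSpace_fin, one_div, Nat.cast_ofNat]

/-- **3D sparseness implies 1D sparseness.** If an open set `S ⊆ ℝ³` is 3D `δ`-sparse around `x₀`
at scale `r` (i.e. `|S ∩ B_r(x₀)| ≤ δ · (4/3)πr³`), then it is 1D `δ^{1/3}`-sparse around `x₀`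
at scale `r`: there is a unit vector `ν` with the one-dimensional Lebesgue measure of
`{t ∈ (−r,r) : x₀ + tν ∈ S}` at most `δ^{1/3} · 2r`. -/
theorem sparse3D_implies_sparse1D
    (S : Set (EuclideanSpace ℝ (Fin 3))) (hS : IsOpen S)
    (x₀ : EuclideanSpace ℝ (Fin 3)) (r δ : ℝ)
    (hr : 0 < r) (hδ0 : 0 < δ) (hδ1 : δ < 1)
    (hsparse3 : volume (S ∩ Metric.ball x₀ r) ≤
      ENNReal.ofReal (δ * ((4 / 3) * Real.pi * r ^ 3))) :
    ∃ ν : EuclideanSpace ℝ (Fin 3), ‖ν‖ = 1 ∧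
      volume {t : ℝ | t ∈ Set.Ioo (-r) r ∧ x₀ + t • ν ∈ S} ≤
        ENNReal.ofReal (δ ^ ((1 : ℝ) / 3) * (2 * r)) :=
  sparse3D_implies_sparse1D_general S hS x₀ r δ hr hδ0 hsparse3
end

section
/- There exists a constant C > 0 (depending only on the dimension 3) with the following property. Let φ : (0, 1/2) → (0,∞) be nondecreasing, let f ∈ L¹(ℝ³), and let K ≥ 0 be such that Ω(f, I(x,r)) ≤ K·φ(r) for every x ∈ ℝ³ and every 0 < r < 1/2. Then for every x ∈ ℝ³ and all 0 < r' ≤ r < 1/2, the cube averages satisfy |f_{I(x,r')} − f_{I(x,r)}| ≤ C·K·( φ(r) + ∫_{r'}^{r} φ(s)/s ds ). -/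
/-!
Comparing both averages with the constant `f_{I(x,b)}` shows
`|f_{I(x,a)} - f_{I(x,b)}| ≤ (b/a)³ Ω(f, I(x,b))`, which is at most `8 K φ(b)` when `a ≤ b ≤ 2a`.
Going from `r'` up to `r` through the dyadic radii `r, r/2, r/4, …`, each step costs `8 K φ`
at the larger radius, and by monotonicity `φ(σ) ≤ 2 ∫_σ^{2σ} φ(s)/s ds`, so all steps but the last
are absorbed into the Dini integral.
-/

open MeasureTheory Set

/-- The open cube in `ℝ³` centered at `x` with side length `r`. -/
def cube (x : EuclideanSpace ℝ (Fin 3)) (r : ℝ) : Set (EuclideanSpace ℝ (Fin 3)) :=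
  {y | ∀ i : Fin 3, |y i - x i| < r / 2}

/-- The mean value `f_{I(x,r)}` of `f` over the cube `I(x,r)` (of volume `r³`). -/
noncomputable def cubeAvg (f : EuclideanSpace ℝ (Fin 3) → ℝ)
    (x : EuclideanSpace ℝ (Fin 3)) (r : ℝ) : ℝ :=
  (r ^ 3)⁻¹ * ∫ y in cube x r, f y

/-- The mean oscillation `Ω(f, I(x,r))` of `f` over the cube `I(x,r)`. -/
noncomputable def meanOsc (f : EuclideanSpace ℝ (Fin 3) → ℝ)
    (x : EuclideanSpace ℝ (Fin 3)) (r : ℝ) : ℝ :=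
  (r ^ 3)⁻¹ * ∫ y in cube x r, |f y - cubeAvg f x r|

theorem cube_eq_preimage_pi (x : EuclideanSpace ℝ (Fin 3)) (r : ℝ) :
    cube x r = (MeasurableEquiv.toLp 2 (Fin 3 → ℝ)).symm ⁻¹'
      univ.pi fun i => Ioo (x i - r / 2) (x i + r / 2) := by
  ext y
  simp only [cube, mem_ofPred_eq, mem_preimage, MeasurableEquiv.toLp_symm_apply, mem_univ_pi,
    mem_Ioo, abs_sub_lt_iff]
  refine forall_congr' fun i => ?_
  constructor <;> intro h <;> constructor <;> linarith [h.1, h.2]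

theorem measurableSet_cube (x : EuclideanSpace ℝ (Fin 3)) (r : ℝ) :
    MeasurableSet (cube x r) := by
  rw [cube_eq_preimage_pi]
  exact (MeasurableEquiv.toLp 2 (Fin 3 → ℝ)).symm.measurable
    (MeasurableSet.univ_pi fun _ => measurableSet_Ioo)

theorem volume_cube (x : EuclideanSpace ℝ (Fin 3)) {r : ℝ} (hr : 0 ≤ r) :
    volume (cube x r) = ENNReal.ofReal (r ^ 3) := by
  rw [cube_eq_preimage_pi,
    (EuclideanSpace.volume_preserving_symm_measurableEquiv_toLp (Fin 3)).measure_preimage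
      (MeasurableSet.univ_pi fun _ => measurableSet_Ioo).nullMeasurableSet,
    volume_pi_pi]
  simp only [Real.volume_Ioo, add_sub_sub_cancel, add_halves, Finset.prod_const,
    Finset.card_univ, Fintype.card_fin, ENNReal.ofReal_pow hr]

theorem cube_mono (x : EuclideanSpace ℝ (Fin 3)) : Monotone (cube x) :=
  fun _ _ hab _ hy i => (hy i).trans_le (by linarith)

theorem abs_cubeAvg_sub_le {f : EuclideanSpace ℝ (Fin 3) → ℝ} {x : EuclideanSpace ℝ (Fin 3)}
    {a b : ℝ} (hf : IntegrableOn f (cube x b)) (ha : 0 < a) (hab : a ≤ b) :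
    |cubeAvg f x a - cubeAvg f x b| ≤ (b / a) ^ 3 * meanOsc f x b := by
  have hb : 0 < b := ha.trans_le hab
  have hosc : ∫ y in cube x b, |f y - cubeAvg f x b| = b ^ 3 * meanOsc f x b := by
    rw [meanOsc]; field_simp
  set c := cubeAvg f x b
  have hfin : ∀ {r}, 0 ≤ r → volume (cube x r) ≠ ⊤ := fun hr => by
    rw [volume_cube x hr]; exact ENNReal.ofReal_ne_top
  have hdiff : cubeAvg f x a - c = (a ^ 3)⁻¹ * ∫ y in cube x a, (f y - c) := by
    rw [integral_sub (hf.mono_set (cube_mono x hab)) (integrableOn_const (hfin ha.le)),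
      setIntegral_const, measureReal_def, volume_cube x ha.le,
      ENNReal.toReal_ofReal (by positivity), smul_eq_mul, cubeAvg]
    field_simp
  have hmono : |∫ y in cube x a, (f y - c)| ≤ ∫ y in cube x b, |f y - c| :=
    (abs_integral_le_integral_abs).trans <|
      setIntegral_mono_set (hf.sub (integrableOn_const (hfin hb.le))).abs
        (Filter.Eventually.of_forall fun _ => abs_nonneg _)
        (cube_mono x hab).eventuallyLE
  calc |cubeAvg f x a - c| = (a ^ 3)⁻¹ * |∫ y in cube x a, (f y - c)| := by
        rw [hdiff, abs_mul, abs_of_pos (by positivity)]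
    _ ≤ (a ^ 3)⁻¹ * (b ^ 3 * meanOsc f x b) := by rw [← hosc]; gcongr
    _ = (b / a) ^ 3 * meanOsc f x b := by field_simp

theorem meanOsc_nonneg (f : EuclideanSpace ℝ (Fin 3) → ℝ) (x : EuclideanSpace ℝ (Fin 3))
    {r : ℝ} (hr : 0 ≤ r) : 0 ≤ meanOsc f x r :=
  mul_nonneg (by positivity) (setIntegral_nonneg (measurableSet_cube x r) fun _ _ => abs_nonneg _)

theorem abs_cubeAvg_sub_le_of_le_two_mul {f : EuclideanSpace ℝ (Fin 3) → ℝ}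
    {x : EuclideanSpace ℝ (Fin 3)} {a b : ℝ} (hf : IntegrableOn f (cube x b)) (ha : 0 < a)
    (hab : a ≤ b) (hb : b ≤ 2 * a) :
    |cubeAvg f x a - cubeAvg f x b| ≤ 8 * meanOsc f x b := by
  have hratio : (b / a) ^ 3 ≤ 2 ^ 3 :=
    pow_le_pow_left₀ (div_nonneg (by linarith) ha.le) ((div_le_iff₀ ha).2 (by linarith)) 3
  calc |cubeAvg f x a - cubeAvg f x b| ≤ (b / a) ^ 3 * meanOsc f x b :=
        abs_cubeAvg_sub_le hf ha hab
    _ ≤ 8 * meanOsc f x b := by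
        norm_num at hratio
        exact mul_le_mul_of_nonneg_right hratio (meanOsc_nonneg f x (by linarith))

section DyadicTelescoping

variable {φ : ℝ → ℝ} {R : ℝ}

theorem integrableOn_div_self_Ioc (hφ : MonotoneOn φ (Ioo 0 R)) {a b : ℝ} (ha : 0 < a)
    (hb : b < R) : IntegrableOn (fun s => φ s / s) (Ioc a b) := by
  have hsub : Icc a b ⊆ Ioo 0 R := fun s hs => ⟨ha.trans_le hs.1, hs.2.trans_lt hb⟩
  have hinv : ContinuousOn (fun s : ℝ => s⁻¹) (Icc a b) :=
    continuousOn_inv₀.mono fun s hs => (ha.trans_le hs.1).ne'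
  have := ((hφ.mono hsub).integrableOn_isCompact (μ := volume) isCompact_Icc).mul_continuousOn
    hinv isCompact_Icc
  simpa only [div_eq_mul_inv] using this.mono_set Ioc_subset_Icc_self

theorem setIntegral_div_self_Ioc_nonneg (hφ0 : ∀ t ∈ Ioo 0 R, 0 ≤ φ t) {a b : ℝ} (ha : 0 < a)
    (hb : b < R) : 0 ≤ ∫ s in Ioc a b, φ s / s :=
  setIntegral_nonneg measurableSet_Ioc fun s hs =>
    div_nonneg (hφ0 s ⟨ha.trans hs.1, hs.2.trans_lt hb⟩) (ha.trans hs.1).le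

/-- On a dyadic interval `φ s / s ≥ φ σ / (2σ)`, and the interval has length `σ`. -/
theorem half_le_setIntegral_div_self_Ioc (hφ : MonotoneOn φ (Ioo 0 R))
    (hφ0 : ∀ t ∈ Ioo 0 R, 0 ≤ φ t) {σ : ℝ} (hσ : 0 < σ) (h2σ : 2 * σ < R) :
    φ σ / 2 ≤ ∫ s in Ioc σ (2 * σ), φ s / s := by
  have hlower : ∀ s ∈ Ioc σ (2 * σ), φ σ / (2 * σ) ≤ φ s / s := fun s hs => by
    have hs0 : 0 < s := hσ.trans hs.1
    have hσs : φ σ ≤ φ s := hφ ⟨hσ, by linarith⟩ ⟨hs0, hs.2.trans_lt h2σ⟩ hs.1.le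
    calc φ σ / (2 * σ) ≤ φ s / (2 * σ) := by gcongr
      _ ≤ φ s / s := div_le_div_of_nonneg_left (hφ0 s ⟨hs0, hs.2.trans_lt h2σ⟩) hs0 hs.2
  calc φ σ / 2 = ∫ _ in Ioc σ (2 * σ), φ σ / (2 * σ) := by
        rw [setIntegral_const, Real.volume_real_Ioc_of_le (by linarith), smul_eq_mul]
        field_simp
        ring
    _ ≤ ∫ s in Ioc σ (2 * σ), φ s / s :=
        setIntegral_mono_on (integrableOn_const measure_Ioc_lt_top.ne)
          (integrableOn_div_self_Ioc hφ hσ h2σ) measurableSet_Ioc hlower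

theorem abs_sub_le_of_dyadic_step {g : ℝ → ℝ} {M : ℝ} (hφ : MonotoneOn φ (Ioo 0 R))
    (hφ0 : ∀ t ∈ Ioo 0 R, 0 ≤ φ t) (hM : 0 ≤ M)
    (hstep : ∀ s t, 0 < s → s ≤ t → t ≤ 2 * s → t < R → |g s - g t| ≤ M * φ t)
    {a b : ℝ} (ha : 0 < a) (hab : a ≤ b) (hb : b < R) :
    |g a - g b| ≤ M * φ b + 2 * M * ∫ s in Ioc a b, φ s / s := by
  have hnear : ∀ {b}, a ≤ b → b ≤ 2 * a → b < R →
      |g a - g b| ≤ M * φ b + 2 * M * ∫ s in Ioc a b, φ s / s := fun hab hb2 hb => by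
    have := setIntegral_div_self_Ioc_nonneg hφ0 ha hb
    have := hstep a _ ha hab hb2 hb
    nlinarith
  obtain ⟨n, hn⟩ := pow_unbounded_of_one_lt (b / a) one_lt_two
  replace hn : b ≤ 2 ^ n * a := by rw [div_lt_iff₀ ha] at hn; exact hn.le
  induction n generalizing b with
  | zero => exact hnear hab (by linarith) hb
  | succ n ih =>
    by_cases hb2 : b ≤ 2 * a
    · exact hnear hab hb2 hb
    -- telescope through the midpoint `σ = b / 2`, absorbing `φ σ` into `∫_σ^b φ(s)/s ds`
    set σ := b / 2 with hσ
    have hbσ : b = 2 * σ := by ring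
    have hσ0 : 0 < σ := by linarith
    have haσ : a ≤ σ := by linarith
    have hσb : σ ≤ b := by linarith
    have hσR : σ < R := by linarith
    have hIH := ih haσ hσR (by rw [pow_succ] at hn; linarith)
    have hlast := hstep σ b hσ0 hσb hbσ.le hb
    have habsorb := half_le_setIntegral_div_self_Ioc hφ hφ0 hσ0 (hbσ ▸ hb)
    rw [← hbσ] at habsorb
    have hsplit : ∫ s in Ioc a b, φ s / s =
        (∫ s in Ioc a σ, φ s / s) + ∫ s in Ioc σ b, φ s / s := by
      rw [← setIntegral_union (Ioc_disjoint_Ioc_of_le le_rfl) measurableSet_Ioc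
        (integrableOn_div_self_Ioc hφ ha hσR) (integrableOn_div_self_Ioc hφ hσ0 hb),
        Ioc_union_Ioc_eq_Ioc haσ hσb]
    calc |g a - g b| ≤ |g a - g σ| + |g σ - g b| := abs_sub_le _ _ _
      _ ≤ (M * φ σ + 2 * M * ∫ s in Ioc a σ, φ s / s) + M * φ b := add_le_add hIH hlast
      _ ≤ M * φ b + 2 * M * ∫ s in Ioc a b, φ s / s := by
        rw [hsplit]; nlinarith [mul_le_mul_of_nonneg_left habsorb hM]

end DyadicTelescoping

/-- **Telescoping estimate on cube averages (Spanne-type).** There is a dimensional constant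
`C > 0` such that whenever `φ : (0,1/2) → (0,∞)` is nondecreasing, `f ∈ L¹(ℝ³)` and
`Ω(f, I(x,r)) ≤ K·φ(r)` for all `x` and all `0 < r < 1/2`, then for all `0 < r' ≤ r < 1/2`,
`|f_{I(x,r')} − f_{I(x,r)}| ≤ C·K·(φ(r) + ∫_{r'}^{r} φ(s)/s ds)`. -/
theorem cube_average_telescoping :
    ∃ C : ℝ, 0 < C ∧
      ∀ (φ : ℝ → ℝ) (f : EuclideanSpace ℝ (Fin 3) → ℝ) (K : ℝ),
        (∀ t : ℝ, 0 < t → t < 1 / 2 → 0 < φ t) →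
        (∀ a b : ℝ, 0 < a → a ≤ b → b < 1 / 2 → φ a ≤ φ b) →
        Integrable f volume → 0 ≤ K →
        (∀ (x : EuclideanSpace ℝ (Fin 3)) (r : ℝ), 0 < r → r < 1 / 2 →
          meanOsc f x r ≤ K * φ r) →
        ∀ (x : EuclideanSpace ℝ (Fin 3)) (r' r : ℝ), 0 < r' → r' ≤ r → r < 1 / 2 →
          |cubeAvg f x r' - cubeAvg f x r| ≤
            C * K * (φ r + ∫ s in Set.Ioc r' r, φ s / s) := by
  refine ⟨16, by norm_num, ?_⟩
  intro φ f K hpos hmono hf hK hosc x r' r hr' hr'r hr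
  have hφ : MonotoneOn φ (Ioo 0 (1 / 2)) := fun a ha b hb hab => hmono a b ha.1 hab hb.2
  have hφ0 : ∀ t ∈ Ioo 0 (1 / 2), 0 ≤ φ t := fun t ht => (hpos t ht.1 ht.2).le
  have hstep : ∀ s t, 0 < s → s ≤ t → t ≤ 2 * s → t < 1 / 2 →
      |cubeAvg f x s - cubeAvg f x t| ≤ 8 * K * φ t := fun s t hs hst ht2 ht => by
    have := abs_cubeAvg_sub_le_of_le_two_mul (x := x) hf.integrableOn hs hst ht2
    have := hosc x t (hs.trans_le hst) ht
    linarith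
  have htele := abs_sub_le_of_dyadic_step hφ hφ0 (by positivity) hstep hr' hr'r hr
  have hint := setIntegral_div_self_Ioc_nonneg hφ0 hr' hr
  have hφr := hφ0 r ⟨hr'.trans_le hr'r, hr⟩
  nlinarith [mul_nonneg hK hφr, mul_nonneg hK hint]
end
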